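/- Assume hypotheses (H): n ≥ 4 is an integer, δ and δ′ are reals with 0 < δ′ < δ < 1/2 and 1/2 − δ′ < 1 − 2δ, λ is a real with 1/2 − δ′ ≤ λ ≤ 1 − 2δ, α is a real with n − 1 − λ/8 < λα < n − 1, and ā ∈ (0,1]. If in addition (ā(2−ā)/2)^{δ′+1/2} ≤ 1/2, then E₁ ≥ 0, E₂ + ā²(2−ā)²(E₁ − D₃) ≥ 0, and E₁·( 2E₂ + ā²(2−ā)²E₁ ) ≥ ā²(2−ā)²·D₃². -/
import Mathlib

set_option maxHeartbeats 2000000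


private lemma Hlem (A t M : ℝ) (hA0 : 0 ≤ A) (hA1 : A ≤ 1) (ht0 : 0 ≤ t) (ht1 : t ≤ 1/2)
    (hM : 23/8 ≤ M) :
    0 ≤ 1/2 + (M+1)*t*(2*A-1) + 2*M*t^2 + (M-2)*(1+2*t)*(2-A)/2 := by
  nlinarith [sq_nonneg (4*M*t - 3), mul_nonneg hA0 ht0, mul_nonneg (mul_nonneg hA0 ht0) ht0,
    mul_nonneg hA0 (mul_nonneg ht0 ht0), sq_nonneg t, mul_nonneg ht0 (sub_nonneg.2 ht1),
    mul_nonneg hA0 (sub_nonneg.2 ht1), mul_nonneg (mul_nonneg hA0 ht0) (sub_nonneg.2 ht1)]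

private lemma Flem (A X M c : ℝ) (hA0 : 0 ≤ A) (hA1 : A ≤ 1) (hX0 : 0 ≤ X) (hX2 : X ≤ 1/2)
    (hXB : 1/2 - X ≤ (1-A)^2/2) (hM : 23/8 ≤ M) (hMc : c^2 ≤ M^2 + M) :
    2*A*c^2*(1-A)*(1/2-X) ≤ M*(2-2*X)*(A/2+(M-2)*X+M*A*(1/2-X)) := by
  have hH := Hlem A (1/2 - X) M hA0 hA1 (by linarith) (by linarith) hM
  have hM0 : (0:ℝ) ≤ M := by linarith
  have p1 : 0 ≤ M*(A*(1/2 + (M+1)*(1/2-X)*(2*A-1) + 2*M*(1/2-X)^2 + (M-2)*(1+2*(1/2-X))*(2-A)/2)) :=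
    mul_nonneg hM0 (mul_nonneg hA0 hH)
  have p2 : 0 ≤ M*((M-2)*(1+2*(1/2-X))*((1-A)^2-1+2*X)/2) := by
    have := mul_nonneg (mul_nonneg (mul_nonneg hM0 (by linarith : (0:ℝ) ≤ M-2))
      (by linarith : (0:ℝ) ≤ 1+2*(1/2-X))) (by linarith : (0:ℝ) ≤ (1-A)^2-1+2*X)
    linarith
  have p3 : 0 ≤ 2*A*(1/2-X)*(1-A)*(M^2+M-c^2) := by
    have := mul_nonneg (mul_nonneg (mul_nonneg (by linarith : (0:ℝ) ≤ 2*A)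
      (by linarith : (0:ℝ) ≤ 1/2-X)) (by linarith : (0:ℝ) ≤ 1-A))
      (by linarith : (0:ℝ) ≤ M^2+M-c^2)
    linarith
  linarith [p1, p2, p3]

private lemma W0lem (A lam M : ℝ) (hA0 : 0 ≤ A) (hA1 : A ≤ 1) (hl0 : 0 ≤ lam) (hl1 : lam ≤ 1)
    (hM : 2 ≤ M) :
    0 ≤ A*(1-A)*(M/2+(1-lam)) + A^2*(lam*(1-A)+A/2+(M-2)/2) := by
  have h1 : 0 ≤ A*(1-A)*(M/2+(1-lam)) :=
    mul_nonneg (mul_nonneg hA0 (by linarith)) (by linarith)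
  have h2 : 0 ≤ A^2*(lam*(1-A)+A/2+(M-2)/2) := by
    have h3 := mul_nonneg hl0 (by linarith : (0:ℝ) ≤ 1-A)
    have h4 : (0:ℝ) ≤ A^2 := sq_nonneg A
    nlinarith [mul_nonneg h4 h3, mul_nonneg h4 hA0, mul_nonneg h4 (by linarith : (0:ℝ) ≤ M-2)]
  linarith

private lemma W5lem (A lam M c : ℝ) (hA0 : 0 ≤ A) (hA1 : A ≤ 1) (hl0 : 0 ≤ lam) (hl1 : lam ≤ 1)
    (hM : c - lam/8 ≤ M) (hc : 3 ≤ c) :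
    0 ≤ A*(1-A)*(M+(1-lam)) + A^2*(lam*(1-A)+A/2+M*A/2) - A^2*(2-A)*c/2 := by
  have hc' : 0 ≤ A^2*(2-A)*(M+lam/8-c) :=
    mul_nonneg (mul_nonneg (sq_nonneg A) (by linarith)) (by linarith)
  have hM2 : (23:ℝ)/8 ≤ M := by linarith
  have hMn : 0 ≤ A*(1-A)^2*(M-23/8) :=
    mul_nonneg (mul_nonneg hA0 (sq_nonneg _)) (by linarith)
  have hln : 0 ≤ A*((1-A)^2 + A*(2-A)/16)*(1-lam) := by
    have : (0:ℝ) ≤ (1-A)^2 + A*(2-A)/16 := by nlinarith [sq_nonneg (1-A), mul_nonneg hA0 (by linarith : (0:ℝ) ≤ 2-A)]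
    exact mul_nonneg (mul_nonneg hA0 this) (by linarith)
  have hR : 0 ≤ A*((15:ℝ)/8*(1-A)^2 + (1-A) + A^2/2 - A*(2-A)/16) := by
    have : (0:ℝ) ≤ (15:ℝ)/8*(1-A)^2 + (1-A) + A^2/2 - A*(2-A)/16 := by
      nlinarith [sq_nonneg (A-1)]
    exact mul_nonneg hA0 this
  linarith [hc', hMn, hln, hR]

private lemma core2 (A X Y lam dp M c : ℝ)
    (hA0 : 0 < A) (hA1 : A ≤ 1) (hX0 : 0 < X) (hX2 : X ≤ 1/2) (hY0 : 0 ≤ Y)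
    (hls : 1/2 - dp ≤ lam) (hl0 : 0 < lam) (hl1 : lam ≤ 1)
    (hM : c - lam/8 ≤ M) (hc : 3 ≤ c) :
    0 ≤ A * (1 - A) * (M * (1 - X) + (1 - lam))
      + A^2 * ((lam - (1/2 - dp)) * (1 - A)^2 * (2 - A) * Y
          + (lam * (1 - A) + A/2 + (M - (2 - A)) * X + M * A * (1/2 - X)))
      - A^2 * (2 - A) * (c * (1/2 - X)) := by
  have W0 := W0lem A lam M hA0.le hA1 hl0.le hl1 (by linarith)
  have W5 := W5lem A lam M c hA0.le hA1 hl0.le hl1 hM hc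
  have k1 : 0 ≤ (2 * X) * (A*(1-A)*(M/2+(1-lam)) + A^2*(lam*(1-A)+A/2+(M-2)/2)) :=
    mul_nonneg (by linarith) W0
  have k2 : 0 ≤ (1 - 2 * X) * (A*(1-A)*(M+(1-lam))
      + A^2*(lam*(1-A)+A/2+M*A/2) - A^2*(2-A)*c/2) := mul_nonneg (by linarith) W5
  have kY : 0 ≤ A^2 * ((lam - (1/2 - dp)) * (1 - A)^2 * (2 - A) * Y) :=
    mul_nonneg (sq_nonneg A) (mul_nonneg (mul_nonneg (mul_nonneg (by linarith)
      (sq_nonneg (1-A))) (by linarith)) hY0)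
  have kX : 0 ≤ A^2 * (A * X) := mul_nonneg (sq_nonneg A) (mul_nonneg hA0.le hX0.le)
  linarith [k1, k2, kY, kX]

private lemma core3 (A X Y lam dp M c : ℝ)
    (hA0 : 0 < A) (hA1 : A ≤ 1) (hX0 : 0 < X) (hX2 : X ≤ 1/2) (hY0 : 0 ≤ Y)
    (hXB : 1/2 - X ≤ (1-A)^2/2)
    (hls : 1/2 - dp ≤ lam) (hl0 : 0 < lam) (hl1 : lam ≤ 1)
    (hM : 23/8 ≤ M) (hMc : c^2 ≤ M^2 + M) (hc : 3 ≤ c) :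
    A^2 * c^2 * (1/2 - X)^2 * (2 - A)^2
      ≤ ((lam - (1/2 - dp)) * (1 - A)^2 * (2 - A) * Y
          + (lam * (1 - A) + A/2 + (M - (2 - A)) * X + M * A * (1/2 - X)))
        * (2 * (A * (1 - A) * (M * (1 - X) + (1 - lam)))
          + A^2 * ((lam - (1/2 - dp)) * (1 - A)^2 * (2 - A) * Y
            + (lam * (1 - A) + A/2 + (M - (2 - A)) * X + M * A * (1/2 - X)))) := by
  have hF := Flem A X M c hA0.le hA1 hX0.le hX2 hXB hM hMc
  have ht0 : (0:ℝ) ≤ 1/2 - X := by linarith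
  have hc0 : (0:ℝ) ≤ c := by linarith
  have hq10 : (0:ℝ) ≤ A/2 + (M-2)*X + M*A*(1/2-X) := by
    have t1 : (0:ℝ) ≤ (M-2)*X := mul_nonneg (by linarith) hX0.le
    have t2 : (0:ℝ) ≤ M*A*(1/2-X) := mul_nonneg (mul_nonneg (by linarith) hA0.le) ht0
    linarith
  have kY : 0 ≤ (lam - (1/2 - dp)) * (1 - A)^2 * (2 - A) * Y :=
    mul_nonneg (mul_nonneg (mul_nonneg (by linarith) (sq_nonneg (1-A))) (by linarith)) hY0
  have hq1Q : A/2 + (M-2)*X + M*A*(1/2-X)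
      ≤ (lam - (1/2 - dp)) * (1 - A)^2 * (2 - A) * Y
          + (lam * (1 - A) + A/2 + (M - (2 - A)) * X + M * A * (1/2 - X)) := by
    have t1 : (0:ℝ) ≤ lam * (1-A) := mul_nonneg hl0.le (by linarith)
    have t2 : (0:ℝ) ≤ A * X := mul_nonneg hA0.le hX0.le
    linarith [kY]
  have hQ0 : (0:ℝ) ≤ (lam - (1/2 - dp)) * (1 - A)^2 * (2 - A) * Y
          + (lam * (1 - A) + A/2 + (M - (2 - A)) * X + M * A * (1/2 - X)) :=
    le_trans hq10 hq1Q
  have hE2'0 : (0:ℝ) ≤ A * (1 - A) * (M * (1 - X) + (1 - lam)) := by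
    have h' : (0:ℝ) ≤ M * (1 - X) := mul_nonneg (by linarith) (by linarith)
    exact mul_nonneg (mul_nonneg hA0.le (by linarith)) (by linarith)
  have h6a : (1/2 - X) * (2 - A)^2 ≤ 2 * (1 - A)^2 := by
    linarith [mul_nonneg (mul_nonneg ht0 hA0.le) (by linarith : (0:ℝ) ≤ 4 - A)]
  have s1 : A^2 * c^2 * (1/2 - X)^2 * (2-A)^2 ≤ 2 * A^2 * c^2 * (1-A)^2 * (1/2 - X) := by
    have k := mul_le_mul_of_nonneg_left h6a
      (mul_nonneg (mul_nonneg (sq_nonneg A) (sq_nonneg c)) ht0)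
    calc A^2 * c^2 * (1/2 - X)^2 * (2-A)^2
        = A^2 * c^2 * (1/2 - X) * ((1/2 - X) * (2 - A)^2) := by ring
      _ ≤ A^2 * c^2 * (1/2 - X) * (2 * (1 - A)^2) := k
      _ = 2 * A^2 * c^2 * (1-A)^2 * (1/2 - X) := by ring
  have s2 : 2 * A^2 * c^2 * (1-A)^2 * (1/2 - X)
      ≤ A * (1-A) * (M * (2 - 2*X) * (A/2 + (M-2)*X + M*A*(1/2-X))) := by
    have k := mul_le_mul_of_nonneg_left hF (mul_nonneg hA0.le (by linarith : (0:ℝ) ≤ 1-A))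
    calc 2 * A^2 * c^2 * (1-A)^2 * (1/2 - X)
        = A * (1-A) * (2*A*c^2*(1-A)*(1/2-X)) := by ring
      _ ≤ A * (1-A) * (M*(2-2*X)*(A/2+(M-2)*X+M*A*(1/2-X))) := k
  have s3 : A * (1-A) * (M * (2 - 2*X) * (A/2 + (M-2)*X + M*A*(1/2-X)))
      ≤ 2 * (A * (1 - A) * (M * (1 - X) + (1 - lam))) * (A/2 + (M-2)*X + M*A*(1/2-X)) := by
    have w : (0:ℝ) ≤ (A * (1-A) * (1 - lam)) * (A/2 + (M-2)*X + M*A*(1/2-X)) :=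
      mul_nonneg (mul_nonneg (mul_nonneg hA0.le (by linarith)) (by linarith)) hq10
    linarith [w]
  have s4 : 2 * (A * (1 - A) * (M * (1 - X) + (1 - lam))) * (A/2 + (M-2)*X + M*A*(1/2-X))
      ≤ ((lam - (1/2 - dp)) * (1 - A)^2 * (2 - A) * Y
          + (lam * (1 - A) + A/2 + (M - (2 - A)) * X + M * A * (1/2 - X)))
        * (2 * (A * (1 - A) * (M * (1 - X) + (1 - lam)))
          + A^2 * ((lam - (1/2 - dp)) * (1 - A)^2 * (2 - A) * Y
            + (lam * (1 - A) + A/2 + (M - (2 - A)) * X + M * A * (1/2 - X)))) := by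
    have p := mul_nonneg hE2'0 (sub_nonneg.2 hq1Q)
    have r := mul_nonneg (sq_nonneg A) (mul_nonneg hQ0 hQ0)
    linarith [p, r]
  linarith [s1, s2, s3, s4]


noncomputable section

def Xc (A δ : ℝ) : ℝ := (A * (2 - A) / 2) ^ (δ + 1 / 2)
def Yc (A δ : ℝ) : ℝ := (A * (2 - A) / 2) ^ (δ - 1 / 2)
def C1 (A δ α : ℝ) : ℝ :=
  (1 - A) ^ 2 / (2 - A) * Yc A δ + (1 - A) / (2 - A) ^ 2
    + α / (2 - A) ^ 2 * Xc A δ + α * A / (2 - A) ^ 2 * (1 / 2 - Xc A δ)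
def C2 (A δ α : ℝ) : ℝ := α * A * (1 - A) * (1 - Xc A δ) - A * (1 - A)
def C3 (A δ α : ℝ) : ℝ :=
  α * A / 2 + (1 - A) ^ 2 / (2 - A) + (α - 2) * (1 - A) ^ 2 / (2 - A) * Xc A δ
def D1 (A δ : ℝ) : ℝ :=
  (1 / 2 - δ) * ((1 - A) ^ 2 / (2 - A)) * Yc A δ - A / (2 * (2 - A) ^ 2) + Xc A δ / (2 - A)
def D2 (A : ℝ) : ℝ := -(A * (1 - A))
def D3 (n : ℕ) (A δ : ℝ) : ℝ := ((n : ℝ) - 1) / (2 - A) * (1 / 2 - Xc A δ)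
def D4 (n : ℕ) (A δ : ℝ) : ℝ :=
  (1 + 2 * δ) * ((1 - A) ^ 2 / (2 - A)) * Xc A δ + ((n : ℝ) - 2) * A * (1 / 2 - Xc A δ)
def D5 (n : ℕ) (A δ : ℝ) : ℝ :=
  (1 + 2 * δ) * ((1 - A) ^ 2 / (2 - A)) * Xc A δ + (n : ℝ) * A * (1 / 2 - Xc A δ)

theorem stmt11 (n : ℕ) (hn : 4 ≤ n) (δ δ' lam α A : ℝ)
    (h1 : 0 < δ') (h2 : δ' < δ) (h3 : δ < 1 / 2)
    (h4 : 1 / 2 - δ' < 1 - 2 * δ)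
    (h5 : 1 / 2 - δ' ≤ lam) (h6 : lam ≤ 1 - 2 * δ)
    (h7 : (n : ℝ) - 1 - lam / 8 < lam * α) (h8 : lam * α < (n : ℝ) - 1)
    (h9 : 0 < A) (h10 : A ≤ 1) (hX : Xc A δ' ≤ (1 : ℝ) / 2) :
    0 ≤ lam * C1 A δ' α - D1 A δ' ∧
    0 ≤ (lam * C2 A δ' α - D2 A)
        + A ^ 2 * (2 - A) ^ 2 * ((lam * C1 A δ' α - D1 A δ') - D3 n A δ') ∧
    A ^ 2 * (2 - A) ^ 2 * (D3 n A δ') ^ 2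
      ≤ (lam * C1 A δ' α - D1 A δ') *
          (2 * (lam * C2 A δ' α - D2 A) + A ^ 2 * (2 - A) ^ 2 * (lam * C1 A δ' α - D1 A δ')) := by
  have hn4 : (4:ℝ) ≤ (n:ℝ) := by exact_mod_cast hn
  have hA2 : (0:ℝ) < 2 - A := by linarith
  have hd2 : (0:ℝ) < (2 - A)^2 := by positivity
  have hB0 : (0:ℝ) < A * (2 - A) / 2 := by positivity
  have hB1 : A * (2 - A) / 2 ≤ 1 := by nlinarith [sq_nonneg (1 - A)]
  have hX0 : 0 < Xc A δ' := Real.rpow_pos_of_pos hB0 _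
  have hY0 : (0:ℝ) ≤ Yc A δ' := (Real.rpow_pos_of_pos hB0 _).le
  have hXB : A * (2 - A) / 2 ≤ Xc A δ' := by
    have h := Real.rpow_le_rpow_of_exponent_ge hB0 hB1 (by linarith : δ' + 1/2 ≤ (1:ℝ))
    rwa [Real.rpow_one] at h
  have htd : 1/2 - Xc A δ' ≤ (1 - A)^2 / 2 := by nlinarith [hXB]
  have hlam0 : 0 < lam := by linarith
  have hlam1 : lam ≤ 1 := by linarith
  have hM23 : (23:ℝ)/8 ≤ lam * α := by linarith
  have hMc : ((n:ℝ) - 1)^2 ≤ (lam * α)^2 + lam * α := by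
    have h9c : (n:ℝ) - 1 ≤ lam * α + 1/8 := by linarith
    nlinarith [mul_self_le_mul_self (by linarith : (0:ℝ) ≤ (n:ℝ) - 1) h9c]
  have hQeq : (lam * C1 A δ' α - D1 A δ') * (2 - A)^2 =
      (lam - (1/2 - δ')) * (1 - A)^2 * (2 - A) * Yc A δ'
        + (lam * (1 - A) + A/2 + (lam * α - (2 - A)) * Xc A δ'
            + lam * α * A * (1/2 - Xc A δ')) := by
    simp only [C1, D1]; field_simp; ring
  have hE1div : lam * C1 A δ' α - D1 A δ' =
      ((lam - (1/2 - δ')) * (1 - A)^2 * (2 - A) * Yc A δ'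
        + (lam * (1 - A) + A/2 + (lam * α - (2 - A)) * Xc A δ'
            + lam * α * A * (1/2 - Xc A δ'))) / (2 - A)^2 := by
    rw [eq_div_iff (ne_of_gt hd2)]; exact hQeq
  have hE2eq : lam * C2 A δ' α - D2 A
      = A * (1 - A) * (lam * α * (1 - Xc A δ') + (1 - lam)) := by
    simp only [C2, D2]; ring
  have hD3div : D3 n A δ' = ((n:ℝ) - 1) * (1/2 - Xc A δ') / (2 - A) := by
    simp only [D3]; ring
  refine ⟨?_, ?_, ?_⟩
  · rw [hE1div]
    refine div_nonneg ?_ hd2.le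
    have kY : 0 ≤ (lam - (1/2 - δ')) * (1 - A)^2 * (2 - A) * Yc A δ' :=
      mul_nonneg (mul_nonneg (mul_nonneg (by linarith) (sq_nonneg (1-A))) hA2.le) hY0
    have t1 : (0:ℝ) ≤ lam * (1 - A) := mul_nonneg hlam0.le (by linarith)
    have t2 : (0:ℝ) ≤ (lam * α - (2 - A)) * Xc A δ' := mul_nonneg (by linarith) hX0.le
    have t3 : (0:ℝ) ≤ lam * α * A * (1/2 - Xc A δ') :=
      mul_nonneg (mul_nonneg (by linarith) h9.le) (by linarith)
    linarith
  · have g2eq : (lam * C2 A δ' α - D2 A)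
        + A ^ 2 * (2 - A) ^ 2 * ((lam * C1 A δ' α - D1 A δ') - D3 n A δ')
        = A * (1 - A) * (lam * α * (1 - Xc A δ') + (1 - lam))
          + A^2 * ((lam - (1/2 - δ')) * (1 - A)^2 * (2 - A) * Yc A δ'
              + (lam * (1 - A) + A/2 + (lam * α - (2 - A)) * Xc A δ'
                  + lam * α * A * (1/2 - Xc A δ')))
          - A^2 * (2 - A) * (((n:ℝ) - 1) * (1/2 - Xc A δ')) := by
      rw [hE2eq, hE1div, hD3div]; field_simp; ring
    rw [g2eq]
    exact core2 A (Xc A δ') (Yc A δ') lam δ' (lam * α) ((n:ℝ) - 1)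
      h9 h10 hX0 hX hY0 h5 hlam0 hlam1 (by linarith) (by linarith)
  · have g3L : A ^ 2 * (2 - A) ^ 2 * (D3 n A δ') ^ 2
        = A^2 * ((n:ℝ) - 1)^2 * (1/2 - Xc A δ')^2 := by
      rw [hD3div]; field_simp
    have g3R : (lam * C1 A δ' α - D1 A δ') *
          (2 * (lam * C2 A δ' α - D2 A) + A ^ 2 * (2 - A) ^ 2 * (lam * C1 A δ' α - D1 A δ'))
        = ((lam - (1/2 - δ')) * (1 - A)^2 * (2 - A) * Yc A δ'
            + (lam * (1 - A) + A/2 + (lam * α - (2 - A)) * Xc A δ'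
                + lam * α * A * (1/2 - Xc A δ')))
          * (2 * (A * (1 - A) * (lam * α * (1 - Xc A δ') + (1 - lam)))
            + A^2 * ((lam - (1/2 - δ')) * (1 - A)^2 * (2 - A) * Yc A δ'
              + (lam * (1 - A) + A/2 + (lam * α - (2 - A)) * Xc A δ'
                  + lam * α * A * (1/2 - Xc A δ')))) / (2 - A)^2 := by
      rw [hE1div, hE2eq]; field_simp
    rw [g3L, g3R, le_div_iff₀ hd2]
    exact core3 A (Xc A δ') (Yc A δ') lam δ' (lam * α) ((n:ℝ) - 1)
      h9 h10 hX0 hX hY0 htd h5 hlam0 hlam1 hM23 hMc (by linarith)
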